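/- In the single-twist case ℓ = 1 with twist order t_1 = 1, hook 0 ≤ h < t and twist coefficient η ∈ 𝔽_{q^m}, assume g is monic (g_t = 1) and g_h·η ≠ 1. Then the expurgated twisted Goppa code equals the expurgated classical Goppa code: for every c = (c_1, …, c_n) ∈ 𝔽_q^n with Σ_{i=1}^n c_i = 0, c belongs to Γ(L, g, 1, h, η) if and only if c belongs to the classical Goppa code Γ(L, g) := {c ∈ 𝔽_q^n : Σ_{i=1}^n c_i (z − α_i)^{−1} = 0 in 𝔽_{q^m}[z]/⟨g(z)⟩}. -/

import Mathlib

/-!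
Put `T_j = Σ_i c_i α_i ^ j / g(α_i)`. The identity
`(g(z) - g(a)) / (z - a) = Σ_{j<t} a ^ j g⟨j⟩(z)` gives
`(z - α_i)⁻¹ = -g(α_i)⁻¹ Σ_{j<t} α_i ^ j g⟨j⟩` modulo `g`, so the classical syndrome is
`-Σ_{j<t} T_j g⟨j⟩` and the twist adds `-η T_t g⟨h⟩`. Both have degree `< t`, and the `g⟨j⟩` have
the distinct degrees `t - 1 - j`, so `c ∈ Γ(L, g)` iff `T_j = 0` for all `j < t`, while `c` lies in
the twisted code iff `T_j = -[j = h] η T_t` for all `j < t`. Finally `Σ_i c_i = 0` says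
`Σ_{m ≤ t} g_m T_m = 0`; in the twisted case this forces `T_t = g_h η T_t`, hence `T_t = 0`.
-/

open Polynomial

attribute [local instance] Classical.propDecidable

/-- The multi-twisted Goppa code `Γ(L, g, 𝕥, 𝕙, η)` (see paper), with `ℓ = L + 1 ≥ 1`
twists, defined via the syndrome condition in the quotient ring `F[z]/⟨g⟩`. -/
noncomputable def MTGoppa {F : Type*} [Field F] (K : Subfield F) {n : ℕ}
    (α : Fin n → F) (g : F[X]) (t : ℕ) {L : ℕ} (tw hk : Fin (L + 1) → ℕ)
    (η : Fin (L + 1) → F) : Set (Fin n → F) :=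
  {c | (∀ i, c i ∈ K) ∧
    ∑ i, (Ideal.Quotient.mk (Ideal.span {g})) (C (c i)) *
      (Ring.inverse ((Ideal.Quotient.mk (Ideal.span {g})) (X - C (α i))) -
        (Ideal.Quotient.mk (Ideal.span {g}))
          (∑ j, C (η j * α i ^ (t - 1 + tw j) / g.eval (α i)) *
            (g /ₘ X ^ (hk j + 1)))) = 0}

/-- The classical Goppa code `Γ(L, g)`: all `c ∈ 𝔽_q^n` with
`Σ_i c_i (z - α_i)⁻¹ = 0` in `F[z]/⟨g⟩`. -/
noncomputable def ClassicalGoppa {F : Type*} [Field F] (K : Subfield F) {n : ℕ}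
    (α : Fin n → F) (g : F[X]) : Set (Fin n → F) :=
  {c | (∀ i, c i ∈ K) ∧
    ∑ i, (Ideal.Quotient.mk (Ideal.span {g})) (C (c i)) *
      Ring.inverse ((Ideal.Quotient.mk (Ideal.span {g})) (X - C (α i))) = 0}

namespace Polynomial

variable {R : Type*} [CommRing R]

theorem coeff_divByMonic_X_pow (p : R[X]) (n k : ℕ) :
    (p /ₘ X ^ n).coeff k = p.coeff (k + n) := by
  nontriviality R
  conv_rhs => rw [← modByMonic_add_div p (X ^ n)]
  rw [coeff_add, add_comm k n, coeff_X_pow_mul', if_pos (Nat.le_add_right n k),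
    Nat.add_sub_cancel_left,
    coeff_eq_zero_of_degree_lt ((degree_modByMonic_lt p (monic_X_pow n)).trans_le _), zero_add]
  rw [degree_X_pow]; exact_mod_cast Nat.le_add_right n k

theorem X_mul_divByMonic_X_pow_succ (p : R[X]) (n : ℕ) :
    X * (p /ₘ X ^ (n + 1)) = p /ₘ X ^ n - C (p.coeff n) := by
  ext (_ | k) <;> simp [coeff_X_mul, coeff_divByMonic_X_pow, coeff_C, add_assoc, add_comm 1]

theorem divByMonic_X_pow_of_natDegree_le {p : R[X]} {n : ℕ} (hp : p.natDegree ≤ n) :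
    p /ₘ X ^ n = C (p.coeff n) := by
  ext (_ | k)
  · simp [coeff_divByMonic_X_pow]
  · rw [coeff_divByMonic_X_pow, coeff_C_succ, coeff_eq_zero_of_natDegree_lt (by omega)]

theorem X_sub_C_mul_sum_divByMonic_X_pow (p : R[X]) (a : R) (n : ℕ) :
    (X - C a) * ∑ j ∈ Finset.range n, C (a ^ j) * (p /ₘ X ^ (j + 1)) =
      p - C (a ^ n) * (p /ₘ X ^ n) - C (∑ j ∈ Finset.range n, p.coeff j * a ^ j) := by
  induction n with
  | zero => simp
  | succ n ih =>
    rw [Finset.sum_range_succ, mul_add, ih, Finset.sum_range_succ, sub_mul, mul_left_comm,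
      X_mul_divByMonic_X_pow_succ]
    simp only [map_add, map_mul, map_pow, pow_succ]
    ring

theorem X_sub_C_mul_sum_divByMonic_X_pow_of_natDegree_le {p : R[X]} {n : ℕ}
    (hp : p.natDegree ≤ n) (a : R) :
    (X - C a) * ∑ j ∈ Finset.range n, C (a ^ j) * (p /ₘ X ^ (j + 1)) = p - C (p.eval a) := by
  rw [X_sub_C_mul_sum_divByMonic_X_pow, divByMonic_X_pow_of_natDegree_le hp,
    eval_eq_sum_range' (Nat.lt_succ_of_le hp), Finset.sum_range_succ]
  simp only [map_add, map_mul, map_pow]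
  ring

theorem degree_sum_C_mul_divByMonic_X_pow_lt {g : R[X]} {t : ℕ} (hg : g.natDegree ≤ t)
    (v : ℕ → R) : (∑ j ∈ Finset.range t, C (v j) * (g /ₘ X ^ (j + 1))).degree < t := by
  refine (degree_lt_iff_coeff_zero _ _).2 fun k hk => ?_
  simp only [finsetSum_coeff, coeff_C_mul, coeff_divByMonic_X_pow]
  exact Finset.sum_eq_zero fun j _ => by rw [coeff_eq_zero_of_natDegree_lt (by omega), mul_zero]

theorem sum_C_mul_divByMonic_X_pow_eq_zero_iff [NoZeroDivisors R] {g : R[X]} {t : ℕ}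
    (hg : g.natDegree = t) (hg0 : g ≠ 0) (v : ℕ → R) :
    ∑ j ∈ Finset.range t, C (v j) * (g /ₘ X ^ (j + 1)) = 0 ↔ ∀ j < t, v j = 0 := by
  refine ⟨fun h0 j => ?_, fun hv => Finset.sum_eq_zero fun j hj => by
    rw [hv j (Finset.mem_range.1 hj), map_zero, zero_mul]⟩
  induction j using Nat.strong_induction_on with
  | _ j ih =>
    intro hj
    -- the coefficient of `X ^ (t - 1 - j)` is triangular in `v`, with diagonal `g.leadingCoeff`
    have hcoeff := congrArg (coeff · (t - 1 - j)) h0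
    simp only [finsetSum_coeff, coeff_C_mul, coeff_divByMonic_X_pow, coeff_zero] at hcoeff
    rw [Finset.sum_eq_single_of_mem j (Finset.mem_range.2 hj) fun i _ hij => ?_,
      show t - 1 - j + (j + 1) = g.natDegree by omega] at hcoeff
    · exact (mul_eq_zero.1 hcoeff).resolve_right (leadingCoeff_ne_zero.2 hg0)
    · rcases lt_or_gt_of_ne hij with hij | hij
      · rw [ih i hij (by omega), zero_mul]
      · rw [coeff_eq_zero_of_natDegree_lt (by omega), mul_zero]

theorem mk_span_singleton_sum_C_mul_divByMonic_X_pow_eq_zero_iff [NoZeroDivisors R] {g : R[X]}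
    {t : ℕ} (hg : g.natDegree = t) (hg0 : g ≠ 0) (v : ℕ → R) :
    Ideal.Quotient.mk (Ideal.span {g})
        (∑ j ∈ Finset.range t, C (v j) * (g /ₘ X ^ (j + 1))) = 0 ↔ ∀ j < t, v j = 0 := by
  rw [Ideal.Quotient.eq_zero_iff_mem, Ideal.mem_span_singleton,
    ← sum_C_mul_divByMonic_X_pow_eq_zero_iff hg hg0]
  refine ⟨fun hdvd => eq_zero_of_dvd_of_degree_lt hdvd ?_, fun h0 => h0 ▸ dvd_zero g⟩
  rw [degree_eq_natDegree hg0, hg]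
  exact degree_sum_C_mul_divByMonic_X_pow_lt hg.le v

end Polynomial

theorem Ring.inverse_eq_of_mul_eq_one {M : Type*} [CommMonoidWithZero M] {a b : M}
    (h : a * b = 1) : Ring.inverse a = b :=
  calc Ring.inverse a = Ring.inverse a * (a * b) := by rw [h, mul_one]
    _ = b := Ring.inverse_mul_cancel_left a b (IsUnit.of_mul_eq_one b h)

theorem forall_add_ite_eq_zero_iff {F : Type*} [Field F] {a T : ℕ → F} {t h : ℕ} {η : F}
    (hht : h < t) (hat : a t = 1) (hrel : ∑ m ∈ Finset.range (t + 1), a m * T m = 0)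
    (hη : a h * η ≠ 1) :
    (∀ j < t, T j + (if j = h then η * T t else 0) = 0) ↔ ∀ j < t, T j = 0 := by
  rw [Finset.sum_range_succ, hat, one_mul] at hrel
  constructor
  · intro hT
    have hsum : ∑ m ∈ Finset.range t, a m * T m = a h * T h :=
      Finset.sum_eq_single_of_mem h (Finset.mem_range.2 hht) fun j hj hjh => by
        rw [show T j = 0 by simpa [hjh] using hT j (Finset.mem_range.1 hj), mul_zero]
    have hTh : T h = -(η * T t) := by simpa [add_eq_zero_iff_eq_neg] using hT h hht
    have hTt : T t * (1 - a h * η) = 0 := by linear_combination hrel - hsum - a h * hTh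
    have hTt0 : T t = 0 := (mul_eq_zero.1 hTt).resolve_right (sub_ne_zero.2 hη.symm)
    intro j hj
    simpa [hTt0] using hT j hj
  · intro hT
    have hTt : T t = 0 := by
      rw [Finset.sum_eq_zero fun m hm => by rw [hT m (Finset.mem_range.1 hm), mul_zero],
        zero_add] at hrel
      exact hrel
    intro j hj
    simp [hT j hj, hTt]

section Goppa

variable {F : Type*} [Field F] {n : ℕ} (α : Fin n → F) (g : F[X])

def goppaMoment (c : Fin n → F) (j : ℕ) : F :=
  ∑ i, c i / g.eval (α i) * α i ^ j

variable {g}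

theorem inverse_mk_X_sub_C {t : ℕ} (hg : g.natDegree ≤ t) {a : F} (ha : g.eval a ≠ 0) :
    Ring.inverse (Ideal.Quotient.mk (Ideal.span {g}) (X - C a)) =
      Ideal.Quotient.mk (Ideal.span {g})
        (C (-(g.eval a)⁻¹) * ∑ j ∈ Finset.range t, C (a ^ j) * (g /ₘ X ^ (j + 1))) := by
  refine Ring.inverse_eq_of_mul_eq_one ?_
  rw [← map_mul, mul_left_comm, X_sub_C_mul_sum_divByMonic_X_pow_of_natDegree_le hg, mul_sub,
    ← C_mul, neg_mul, inv_mul_cancel₀ ha, map_sub, map_mul, Ideal.Quotient.mk_singleton_self]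
  simp

theorem sum_mk_C_mul_inverse_mk_X_sub_C {t : ℕ} (hg : g.natDegree ≤ t)
    (hgα : ∀ i, g.eval (α i) ≠ 0) (c : Fin n → F) :
    ∑ i, Ideal.Quotient.mk (Ideal.span {g}) (C (c i)) *
        Ring.inverse (Ideal.Quotient.mk (Ideal.span {g}) (X - C (α i))) =
      -Ideal.Quotient.mk (Ideal.span {g})
        (∑ j ∈ Finset.range t, C (goppaMoment α g c j) * (g /ₘ X ^ (j + 1))) := by
  simp only [inverse_mk_X_sub_C hg (hgα _), ← map_mul, ← map_sum, ← map_neg]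
  congr 1
  simp only [goppaMoment, map_sum, Finset.mul_sum, Finset.sum_mul, ← Finset.sum_neg_distrib]
  rw [Finset.sum_comm]
  refine Finset.sum_congr rfl fun j _ => Finset.sum_congr rfl fun i _ => ?_
  simp only [map_mul, map_neg, div_eq_mul_inv]
  ring

theorem sum_coeff_mul_goppaMoment {t : ℕ} (hg : g.natDegree ≤ t)
    (hgα : ∀ i, g.eval (α i) ≠ 0) (c : Fin n → F) :
    ∑ m ∈ Finset.range (t + 1), g.coeff m * goppaMoment α g c m = ∑ i, c i := by
  simp only [goppaMoment, Finset.mul_sum]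
  rw [Finset.sum_comm]
  refine Finset.sum_congr rfl fun i _ => ?_
  simp_rw [mul_left_comm (g.coeff _), ← Finset.mul_sum,
    ← eval_eq_sum_range' (Nat.lt_succ_of_le hg)]
  exact div_mul_cancel₀ (c i) (hgα i)

theorem mem_classicalGoppa_iff {K : Subfield F} {t : ℕ} (hg : g.natDegree = t) (hg0 : g ≠ 0)
    (hgα : ∀ i, g.eval (α i) ≠ 0) {c : Fin n → F} (hc : ∀ i, c i ∈ K) :
    c ∈ ClassicalGoppa K α g ↔ ∀ j < t, goppaMoment α g c j = 0 := by
  rw [ClassicalGoppa, Set.mem_ofPred_eq, and_iff_right hc,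
    sum_mk_C_mul_inverse_mk_X_sub_C α hg.le hgα, neg_eq_zero,
    mk_span_singleton_sum_C_mul_divByMonic_X_pow_eq_zero_iff hg hg0]

theorem mem_MTGoppa_single_iff {K : Subfield F} {t h : ℕ} (hg : g.natDegree = t) (hg0 : g ≠ 0)
    (hgα : ∀ i, g.eval (α i) ≠ 0) (hht : h < t) (η : F) {c : Fin n → F}
    (hc : ∀ i, c i ∈ K) :
    c ∈ MTGoppa K α g t (fun _ : Fin 1 => 1) (fun _ : Fin 1 => h) (fun _ : Fin 1 => η) ↔
      ∀ j < t, goppaMoment α g c j + (if j = h then η * goppaMoment α g c t else 0) = 0 := by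
  have htwist : ∑ i, Ideal.Quotient.mk (Ideal.span {g}) (C (c i)) *
      Ideal.Quotient.mk (Ideal.span {g})
        (C (η * α i ^ t / g.eval (α i)) * (g /ₘ X ^ (h + 1))) =
      Ideal.Quotient.mk (Ideal.span {g}) (C (η * goppaMoment α g c t) * (g /ₘ X ^ (h + 1))) := by
    simp only [← map_mul, goppaMoment, Finset.mul_sum, map_sum, Finset.sum_mul]
    refine Finset.sum_congr rfl fun i _ => congrArg _ ?_
    simp only [map_mul, div_eq_mul_inv]
    ring
  have hcombine : ∑ j ∈ Finset.range t, C (goppaMoment α g c j) * (g /ₘ X ^ (j + 1)) +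
      C (η * goppaMoment α g c t) * (g /ₘ X ^ (h + 1)) =
        ∑ j ∈ Finset.range t, C (goppaMoment α g c j +
          (if j = h then η * goppaMoment α g c t else 0)) * (g /ₘ X ^ (j + 1)) := by
    simp only [C_add, add_mul, Finset.sum_add_distrib, apply_ite C, map_zero, ite_mul, zero_mul,
      Finset.sum_ite_eq', Finset.mem_range, if_pos hht]
  rw [MTGoppa, Set.mem_ofPred_eq, and_iff_right hc]
  simp only [Finset.sum_const, Finset.card_fin, zero_add, one_smul,
    Nat.sub_add_cancel (Nat.one_le_of_lt hht), mul_sub, Finset.sum_sub_distrib]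
  rw [sum_mk_C_mul_inverse_mk_X_sub_C α hg.le hgα, htwist, ← neg_add', neg_eq_zero, ← map_add,
    hcombine, mk_span_singleton_sum_C_mul_divByMonic_X_pow_eq_zero_iff hg hg0]

end Goppa

theorem stmt3_general {F : Type*} [Field F] (K : Subfield F)
    {n : ℕ} (α : Fin n → F)
    (g : F[X]) (t : ℕ) (hgdeg : g.natDegree = t)
    (hgmonic : g.Monic) (hgα : ∀ i, g.eval (α i) ≠ 0)
    (h : ℕ) (hht : h < t) (η : F)
    (hgh : g.coeff h * η ≠ 1)
    (c : Fin n → F) (hc : ∀ i, c i ∈ K) (hsum : ∑ i, c i = 0) :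
    c ∈ MTGoppa K α g t (fun _ : Fin 1 => 1) (fun _ : Fin 1 => h) (fun _ : Fin 1 => η) ↔
      c ∈ ClassicalGoppa K α g := by
  have hmoments := sum_coeff_mul_goppaMoment α hgdeg.le hgα c
  rw [hsum] at hmoments
  rw [mem_MTGoppa_single_iff α hgdeg hgmonic.ne_zero hgα hht η hc,
    mem_classicalGoppa_iff α hgdeg hgmonic.ne_zero hgα hc]
  exact forall_add_ite_eq_zero_iff hht (hgdeg ▸ hgmonic.coeff_natDegree) hmoments hgh

/-- in the single-twist case `ℓ = 1`, `t_1 = 1`, hook `h < t`, with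
`g` monic and `g_h · η ≠ 1`, the expurgated twisted Goppa code equals the
expurgated classical Goppa code: for every `c ∈ 𝔽_q^n` with `Σ_i c_i = 0`,
`c ∈ Γ(L, g, 1, h, η)` iff `c ∈ Γ(L, g)`. -/
theorem stmt3 {F : Type*} [Field F] [Fintype F] (K : Subfield F)
    {n : ℕ} (α : Fin n → F) (hα : Function.Injective α)
    (g : F[X]) (t : ℕ) (ht : 1 ≤ t) (hgdeg : g.natDegree = t)
    (hgmonic : g.Monic) (hgα : ∀ i, g.eval (α i) ≠ 0)
    (h : ℕ) (hht : h < t) (η : F)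
    (hgh : g.coeff h * η ≠ 1)
    (c : Fin n → F) (hc : ∀ i, c i ∈ K) (hsum : ∑ i, c i = 0) :
    c ∈ MTGoppa K α g t (fun _ : Fin 1 => 1) (fun _ : Fin 1 => h) (fun _ : Fin 1 => η) ↔
      c ∈ ClassicalGoppa K α g :=
  stmt3_general K α g t hgdeg hgmonic hgα h hht η hgh c hc hsum
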